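/- arXiv:2406.03944 — 2 statements merged into one kernel-verified Lean document; each statement's English description precedes it below -/
import Mathlib

section
/- Suppose a nonnegative sequence a_t satisfies a_{t+1} = a_t + c/(1 + b·exp(a_t)) with 0 ≤ c ≤ 1 and b ≥ 0, and let x_t be the unique solution of x_t + b·exp(x_t) = c·t + a_0 + b·exp(a_0). Then for all t ≥ 0, x_t ≤ a_t ≤ x_t + c/(1 + b·exp(a_0)). -/
open Real

/-- Discrete-to-continuous comparison for logistic-loss style dynamics
(Lemma C.1 of Meng et al.): if a nonnegative sequence satisfies
`a_{t+1} = a_t + c / (1 + b e^{a_t})` with `0 ≤ c ≤ 1`, `b ≥ 0`, and `x_t` solves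
`x_t + b e^{x_t} = c t + a_0 + b e^{a_0}`, then `x_t ≤ a_t ≤ x_t + c / (1 + b e^{a_0})`. -/
theorem discrete_continuous_comparison (a x : ℕ → ℝ) (b c : ℝ)
    (hc0 : 0 ≤ c) (hc1 : c ≤ 1) (hb : 0 ≤ b)
    (hnonneg : ∀ t, 0 ≤ a t)
    (hrec : ∀ t, a (t + 1) = a t + c / (1 + b * exp (a t)))
    (hx : ∀ t, x t + b * exp (x t) = c * t + a 0 + b * exp (a 0)) :
    ∀ t, x t ≤ a t ∧ a t ≤ x t + c / (1 + b * exp (a 0)) := by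
  have hmono : ∀ u v : ℝ, u + b * exp u ≤ v + b * exp v → u ≤ v := by
    intro u v h
    by_contra hlt
    push_neg at hlt
    have hexp : exp v < exp u := exp_lt_exp.mpr hlt
    nlinarith [exp_pos u, exp_pos v]
  have hden : ∀ y : ℝ, 0 < 1 + b * exp y := by
    intro y; nlinarith [exp_pos y]
  have hstep : ∀ t, a t ≤ a (t + 1) := by
    intro t
    rw [hrec t]
    have := div_nonneg hc0 (hden (a t)).le
    linarith
  have ha0le : ∀ t, a 0 ≤ a t := by
    intro t
    induction t with
    | zero => exact le_refl _
    | succ n ih => exact ih.trans (hstep n)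
  have hFlower : ∀ t : ℕ, c * t + a 0 + b * exp (a 0) ≤ a t + b * exp (a t) := by
    intro t
    induction t with
    | zero => simp
    | succ n ih =>
      have hd : 0 < 1 + b * exp (a n) := hden (a n)
      set δ := c / (1 + b * exp (a n)) with hδ
      have hδ0 : 0 ≤ δ := div_nonneg hc0 hd.le
      have hδeq : δ * (1 + b * exp (a n)) = c := div_mul_cancel₀ c hd.ne'
      have hexp : δ + 1 ≤ exp δ := add_one_le_exp δ
      have key : a n + b * exp (a n) + c ≤ a (n + 1) + b * exp (a (n + 1)) := by
        rw [hrec n, exp_add, ← hδ]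
        have h1 : b * exp (a n) * (δ + 1) ≤ b * exp (a n) * exp δ :=
          mul_le_mul_of_nonneg_left hexp (mul_nonneg hb (exp_pos (a n)).le)
        nlinarith [h1, hδeq]
      push_cast
      push_cast at ih
      linarith
  have hxa : ∀ t, x t ≤ a t := by
    intro t
    exact hmono _ _ (by rw [hx t]; exact hFlower t)
  have hx0 : x 0 = a 0 := by
    refine le_antisymm (hxa 0) (hmono _ _ ?_)
    rw [hx 0]
    simp
  set C := c / (1 + b * exp (a 0)) with hC
  have hC0 : 0 ≤ C := div_nonneg hc0 (hden (a 0)).le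
  intro t
  refine ⟨hxa t, ?_⟩
  induction t with
  | zero => rw [hx0]; linarith
  | succ n ih =>
    have hdn : 0 < 1 + b * exp (a n) := hden (a n)
    have hdenle : 1 + b * exp (a 0) ≤ 1 + b * exp (a n) := by
      have := exp_le_exp.mpr (ha0le n)
      nlinarith
    have hstepC : c / (1 + b * exp (a n)) ≤ C := by
      rw [hC]; gcongr
    rcases le_or_gt (x (n + 1)) (a n) with hcase | hcase
    · -- x (n+1) ≤ a n : use the continuous increment bound
      have hxmono : x n ≤ x (n + 1) := by
        apply hmono
        rw [hx n, hx (n + 1)]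
        push_cast
        nlinarith [hc0]
      have hdiff : x (n + 1) - x n + b * (exp (x (n + 1)) - exp (x n)) = c := by
        have h1 := hx n
        have h2 := hx (n + 1)
        push_cast at h1 h2
        linarith
      have hconv : exp (x (n + 1)) - exp (x n) ≤
          exp (x (n + 1)) * (x (n + 1) - x n) := by
        have h := add_one_le_exp (x n - x (n + 1))
        have h2 : exp (x n - x (n + 1)) * exp (x (n + 1)) = exp (x n) := by
          rw [← exp_add]; ring_nf
        have h3 := mul_le_mul_of_nonneg_right h (exp_pos (x (n + 1))).le
        nlinarith [h2, h3]
      have hexple : exp (x (n + 1)) ≤ exp (a n) := exp_le_exp.mpr hcase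
      have hcle : c ≤ (x (n + 1) - x n) * (1 + b * exp (a n)) := by
        nlinarith [mul_le_mul_of_nonneg_left hconv hb,
          mul_nonneg (mul_nonneg hb (sub_nonneg.mpr hexple)) (sub_nonneg.mpr hxmono)]
      have hdge : c / (1 + b * exp (a n)) ≤ x (n + 1) - x n :=
        (div_le_iff₀ hdn).mpr hcle
      rw [hrec n]
      linarith
    · -- a n < x (n+1)
      rw [hrec n]
      linarith
end

section
/- Let x_t be the unique solution of x + b·exp(x) = c·t + b where b = exp(κ) with |κ| ≤ log(3/2), and c > 0. Then for all t ≥ 0, log(c·t/8 + 2/3) ≤ x_t ≤ log(2c·t + 1) (with the lower bound understood whenever c·t/8 + 2/3 ≥ 2/3 > 0). -/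
open Real

/-- Logarithmic bounds on the solution of `x + b e^x = c t + b` with `b = e^κ`,
`|κ| ≤ log (3/2)` and `c > 0`: for all `t ≥ 0`,
`log (c t / 8 + 2/3) ≤ x_t ≤ log (2 c t + 1)`. -/
theorem log_growth_bounds (κ c : ℝ) (hκ : |κ| ≤ log (3 / 2)) (hc : 0 < c)
    (x : ℕ → ℝ) (hx : ∀ t : ℕ, x t + exp κ * exp (x t) = c * t + exp κ) :
    ∀ t : ℕ, log (c * t / 8 + 2 / 3) ≤ x t ∧ x t ≤ log (2 * c * t + 1) := by
  obtain ⟨hκ1, hκ2⟩ := abs_le.mp hκ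
  have hb2 : exp κ ≤ 3 / 2 := by
    calc exp κ ≤ exp (log (3/2)) := exp_le_exp.mpr hκ2
    _ = 3/2 := exp_log (by norm_num)
  have hb1 : (2:ℝ)/3 ≤ exp κ := by
    have : exp (-log (3/2)) ≤ exp κ := exp_le_exp.mpr (by linarith)
    rwa [exp_neg, exp_log (by norm_num), show ((3:ℝ)/2)⁻¹ = 2/3 by norm_num] at this
  have hmono : StrictMono fun y : ℝ => y + exp κ * exp y :=
    strictMono_id.add_monotone ((exp_monotone).const_mul (exp_pos κ).le)
  intro t
  have hct : 0 ≤ c * t := mul_nonneg hc.le (Nat.cast_nonneg t)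
  constructor
  · -- lower bound
    set u : ℝ := c * t / 8 + 2 / 3 with hu
    have hupos : 0 < u := by positivity
    have hlog : log u ≤ u - 1 := log_le_sub_one_of_pos hupos
    have key : log u + exp κ * exp (log u) ≤ c * t + exp κ := by
      rw [exp_log hupos]
      have h1 : exp κ * u ≤ 3/2 * (c * t / 8) + exp κ * (2/3) := by
        rw [hu, mul_add]
        gcongr
      rw [hu] at hlog h1 ⊢
      linarith
    have := hmono.le_iff_le (a := log u) (b := x t)
    rw [hx t] at this
    exact this.mp key
  · -- upper bound
    set v : ℝ := 2 * c * t + 1 with hv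
    have hvpos : (1:ℝ) ≤ v := by rw [hv]; nlinarith
    have key : c * t + exp κ ≤ log v + exp κ * exp (log v) := by
      rw [exp_log (by linarith)]
      have hlv : 0 ≤ log v := log_nonneg hvpos
      nlinarith [exp_pos κ]
    have := hmono.le_iff_le (a := x t) (b := log v)
    rw [hx t] at this
    exact this.mp key
end
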